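/- Let ν ∈ (0,1) and s > 0, and define f_μ(x) := x^{1/2} J_μ(xs) for μ ∈ {ν, −ν}, where J_μ(w) := (w/2)^μ · Σ_{k=0}^∞ (−w²/4)^k / (k! Γ(μ+k+1)) for w > 0. Then the following boundary limits hold as x → 0⁺: (a) [f_ν, x^{1/2+ν}]_x → 0; (b) [f_{−ν}, x^{1/2+ν}]_x → −2^{1+ν} s^{−ν} / Γ(−ν); (c) [f_ν, x^{1/2−ν}]_x → −s^{ν} / (2^{ν−1} Γ(ν)); (d) [f_{−ν}, x^{1/2−ν}]_x → 0. Here Γ is the real Gamma function (note Γ(−ν) is finite and nonzero for ν ∈ (0,1)). -/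

import Mathlib

open MeasureTheory Set Filter

/-- The Bessel function of the first kind of order `μ`, defined for `w > 0` by the
convergent series `J_μ(w) = (w/2)^μ Σ_{k≥0} (−w²/4)^k / (k! Γ(μ+k+1))`. -/
noncomputable def besselJ (μ : ℝ) (w : ℝ) : ℝ :=
  (w / 2) ^ μ * ∑' k : ℕ, (-(w ^ 2) / 4) ^ k / ((k.factorial : ℝ) * Real.Gamma (μ + k + 1))

/-- Wronskian-type bracket `[f, φ]_x = f(x)φ'(x) − f'(x)φ(x)` for real functions. -/
noncomputable def wBracketR (f φ : ℝ → ℝ) (x : ℝ) : ℝ :=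
  f x * deriv φ x - deriv f x * φ x

/-!
Write `J_μ(w) = (w/2)^μ G_μ(w²)` with `G_μ(t) = Σ_k (-1/4)^k tᵏ / (k! Γ(μ+k+1))`, an entire power
series by the ratio test. Then `f_μ(x) = C x^a h(x²)` with `C = (s/2)^μ`, `a = 1/2 + μ` and
`h(t) = G_μ(s² t)` smooth, and for such a function the bracket against `x^b` is
`C x^(a+b-1) ((b - a) h(x²) - 2 x² h'(x²))`. If `a + b = 1` the power disappears and the bracket
tends to `C (b - a) h(0) = C (b - a) / Γ(μ+1)`; if `b = a` only `-2C x^(2a+1) h'(x²)` is left,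
which tends to `0` because `2a + 1 = 2 + 2μ > 0`.
-/

open Topology FormalMultilinearSeries

lemma wBracketR_eq_of_eqOn {f g φ : ℝ → ℝ} {U : Set ℝ} (hU : IsOpen U) (hfg : EqOn f g U)
    {x : ℝ} (hx : x ∈ U) : wBracketR f φ x = wBracketR g φ x := by
  rw [wBracketR, wBracketR, hfg hx, (hfg.eventuallyEq_of_mem (hU.mem_nhds hx)).deriv_eq]

section RpowMulCompSq

variable {h : ℝ → ℝ}

lemma wBracketR_rpow_mul_comp_sq (C a b : ℝ) {x : ℝ} (hx : 0 < x)
    (hd : DifferentiableAt ℝ h (x ^ 2)) :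
    wBracketR (fun y => C * y ^ a * h (y ^ 2)) (fun y => y ^ b) x
      = C * x ^ (a + b - 1) * ((b - a) * h (x ^ 2) - 2 * x ^ 2 * deriv h (x ^ 2)) := by
  have hf : HasDerivAt (fun y => C * y ^ a * h (y ^ 2))
      (C * (a * x ^ (a - 1)) * h (x ^ 2) + C * x ^ a * (deriv h (x ^ 2) * (2 * x))) x := by
    have hsq : HasDerivAt (fun y : ℝ => y ^ 2) (2 * x) x := by
      simpa using hasDerivAt_pow 2 x
    exact ((Real.hasDerivAt_rpow_const (Or.inl hx.ne')).const_mul C).mul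
      (HasDerivAt.comp (h₂ := h) x hd.hasDerivAt hsq)
  rw [wBracketR, hf.deriv, Real.deriv_rpow_const, Real.rpow_sub_one hx.ne',
    Real.rpow_sub_one hx.ne', Real.rpow_sub_one hx.ne', Real.rpow_add hx]
  field_simp
  ring

lemma tendsto_wBracketR_rpow_mul_comp_sq_of_add_eq_one (hh : ContDiff ℝ 1 h) (C : ℝ)
    {a b : ℝ} (hab : a + b = 1) :
    Tendsto (fun x => wBracketR (fun y => C * y ^ a * h (y ^ 2)) (fun y => y ^ b) x)
      (𝓝[>] 0) (𝓝 (C * (b - a) * h 0)) := by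
  have hcont : Continuous fun x : ℝ =>
      C * ((b - a) * h (x ^ 2) - 2 * x ^ 2 * deriv h (x ^ 2)) := by
    have hh' := hh.continuous_deriv le_rfl
    have hh₀ := hh.continuous
    fun_prop
  refine Tendsto.congr' ?_ ((hcont.tendsto' 0 _ (by ring_nf)).mono_left nhdsWithin_le_nhds)
  filter_upwards [self_mem_nhdsWithin] with x hx
  rw [wBracketR_rpow_mul_comp_sq C a b hx (hh.differentiable one_ne_zero _), hab, sub_self,
    Real.rpow_zero, mul_one]

lemma tendsto_wBracketR_rpow_mul_comp_sq_self (hh : ContDiff ℝ 1 h) (C : ℝ) {a : ℝ}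
    (ha : -1 / 2 < a) :
    Tendsto (fun x => wBracketR (fun y => C * y ^ a * h (y ^ 2)) (fun y => y ^ a) x)
      (𝓝[>] 0) (𝓝 0) := by
  have hpow : Tendsto (fun x : ℝ => x ^ (2 * a + 1)) (𝓝[>] 0) (𝓝 0) := by
    have := (Real.continuousAt_rpow_const 0 (2 * a + 1) (Or.inr (by linarith))).tendsto
    rw [Real.zero_rpow (by linarith)] at this
    exact this.mono_left nhdsWithin_le_nhds
  have hderiv := ((hh.continuous_deriv le_rfl).tendsto 0).comp
    ((continuous_pow 2).tendsto' (0 : ℝ) 0 (by simp))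
  have := (hpow.const_mul (-2 * C)).mul (hderiv.mono_left nhdsWithin_le_nhds)
  rw [mul_zero, zero_mul] at this
  refine this.congr' ?_
  filter_upwards [self_mem_nhdsWithin] with x hx
  rw [wBracketR_rpow_mul_comp_sq C a a hx (hh.differentiable one_ne_zero _), Function.comp_apply,
    sub_self, zero_mul, zero_sub, show 2 * a + 1 = a + a - 1 + 2 by ring,
    Real.rpow_add hx, Real.rpow_two]
  ring

end RpowMulCompSq

noncomputable def besselCoeff (μ : ℝ) (k : ℕ) : ℝ :=
  (-1 / 4) ^ k / ((k.factorial : ℝ) * Real.Gamma (μ + k + 1))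

noncomputable def besselSeries (μ : ℝ) : ℝ → ℝ := ofScalarsSum (besselCoeff μ)

lemma besselJ_eq_besselSeries (μ w : ℝ) :
    besselJ μ w = (w / 2) ^ μ * besselSeries μ (w ^ 2) := by
  rw [besselJ, besselSeries, ofScalars_sum_eq]
  congr 1
  refine tsum_congr fun k => ?_
  rw [besselCoeff, smul_eq_mul, show -(w ^ 2) / 4 = -1 / 4 * w ^ 2 by ring, mul_pow]
  ring

lemma besselSeries_zero (μ : ℝ) : besselSeries μ 0 = (Real.Gamma (μ + 1))⁻¹ := by
  simp [besselSeries, besselCoeff]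

lemma besselCoeff_ne_zero {μ : ℝ} {k : ℕ} (hk : -μ - 1 < k) : besselCoeff μ k ≠ 0 := by
  have : 0 < Real.Gamma (μ + k + 1) := Real.Gamma_pos_of_pos (by linarith)
  unfold besselCoeff
  positivity

lemma besselCoeff_succ {μ : ℝ} {k : ℕ} (hk : -μ - 1 < k) :
    besselCoeff μ (k + 1) = besselCoeff μ k * (-1 / 4) / ((k + 1) * (μ + k + 1)) := by
  rw [besselCoeff, besselCoeff, Nat.factorial_succ, pow_succ, Nat.cast_mul, Nat.cast_succ,
    show μ + (k + 1) + 1 = (μ + k + 1) + 1 by ring,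
    Real.Gamma_add_one (by linarith)]
  field_simp

lemma radius_ofScalars_besselCoeff (μ : ℝ) : (ofScalars ℝ (besselCoeff μ)).radius = ⊤ := by
  have hev : ∀ᶠ k : ℕ in atTop, -μ - 1 < k := by
    obtain ⟨N, hN⟩ := exists_nat_gt (-μ - 1)
    filter_upwards [eventually_ge_atTop N] with k hk
    exact hN.trans_le (by exact_mod_cast hk)
  refine ofScalars_radius_eq_top_of_tendsto _ _ (hev.mono fun k => besselCoeff_ne_zero) ?_
  have hlim : Tendsto (fun k : ℕ => 1 / 4 / (((k : ℝ) + 1) * |μ + k + 1|)) atTop (𝓝 0) := by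
    refine tendsto_const_nhds.div_atTop (Tendsto.atTop_mul_atTop₀ ?_ ?_)
    · exact tendsto_atTop_add_const_right _ _ tendsto_natCast_atTop_atTop
    · exact tendsto_abs_atTop_atTop.comp
        (tendsto_atTop_add_const_right _ _
          (tendsto_atTop_add_const_left _ _ tendsto_natCast_atTop_atTop))
  refine hlim.congr' ?_
  filter_upwards [hev] with k hk
  have hk1 : (0 : ℝ) < k + 1 := by positivity
  rw [Nat.succ_eq_add_one, besselCoeff_succ hk, mul_div_assoc, norm_mul,
    mul_div_cancel_left₀ _ (norm_ne_zero_iff.mpr (besselCoeff_ne_zero hk)), norm_div, norm_mul,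
    Real.norm_eq_abs, Real.norm_eq_abs, abs_of_pos hk1]
  norm_num

lemma contDiff_besselSeries (μ : ℝ) {n : WithTop ℕ∞} : ContDiff ℝ n (besselSeries μ) := by
  have := (ofScalars ℝ (besselCoeff μ)).analyticOnNhd
  rw [radius_ofScalars_besselCoeff, Metric.eball_top] at this
  exact this.contDiff

lemma wBracketR_sqrt_mul_besselJ_eventuallyEq (μ : ℝ) {s : ℝ} (hs : 0 ≤ s) (φ : ℝ → ℝ) :
    (fun x => wBracketR (fun y => y ^ ((1:ℝ)/2) * besselJ μ (y * s)) φ x) =ᶠ[𝓝[>] 0]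
      fun x => wBracketR
        (fun y => (s / 2) ^ μ * y ^ ((1:ℝ)/2 + μ) * besselSeries μ (s ^ 2 * y ^ 2)) φ x := by
  have heq : EqOn (fun y => y ^ ((1:ℝ)/2) * besselJ μ (y * s))
      (fun y => (s / 2) ^ μ * y ^ ((1:ℝ)/2 + μ) * besselSeries μ (s ^ 2 * y ^ 2)) (Ioi 0) := by
    intro y (hy : 0 < y)
    dsimp only
    rw [besselJ_eq_besselSeries, mul_div_assoc, Real.mul_rpow hy.le (by positivity),
      Real.rpow_add hy, mul_pow, mul_comm (y ^ 2)]
    ring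
  filter_upwards [self_mem_nhdsWithin] with x hx
  exact wBracketR_eq_of_eqOn isOpen_Ioi heq hx

lemma contDiff_besselSeries_const_mul (μ c : ℝ) :
    ContDiff ℝ 1 fun t => besselSeries μ (c * t) :=
  (contDiff_besselSeries μ).comp (contDiff_const.mul contDiff_id)

theorem tendsto_wBracketR_besselJ_of_add_eq_one {μ b s : ℝ} (hs : 0 ≤ s)
    (hb : 1 / 2 + μ + b = 1) :
    Tendsto (fun x => wBracketR (fun y => y ^ ((1:ℝ)/2) * besselJ μ (y * s)) (fun y => y ^ b) x)
      (𝓝[>] 0) (𝓝 ((s / 2) ^ μ * (b - (1 / 2 + μ)) * (Real.Gamma (μ + 1))⁻¹)) := by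
  have := tendsto_wBracketR_rpow_mul_comp_sq_of_add_eq_one
    (contDiff_besselSeries_const_mul μ (s ^ 2)) ((s / 2) ^ μ) hb
  rw [mul_zero, besselSeries_zero] at this
  exact this.congr' (wBracketR_sqrt_mul_besselJ_eventuallyEq μ hs _).symm

theorem tendsto_wBracketR_besselJ_self {μ b s : ℝ} (hs : 0 ≤ s) (hμ : -1 < μ)
    (hb : b = 1 / 2 + μ) :
    Tendsto (fun x => wBracketR (fun y => y ^ ((1:ℝ)/2) * besselJ μ (y * s)) (fun y => y ^ b) x)
      (𝓝[>] 0) (𝓝 0) := by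
  subst hb
  exact (tendsto_wBracketR_rpow_mul_comp_sq_self (contDiff_besselSeries_const_mul μ (s ^ 2))
    ((s / 2) ^ μ) (by linarith)).congr' (wBracketR_sqrt_mul_besselJ_eventuallyEq μ hs _).symm

/-- Boundary limits at `0⁺` of the brackets of `f_{±ν}(x) = x^{1/2} J_{±ν}(xs)` against the
weights `x^{1/2+ν}` and `x^{1/2−ν}`, for `ν ∈ (0,1)` and `s > 0`:
(a) `[f_ν, x^{1/2+ν}]ₓ → 0`; (b) `[f_{−ν}, x^{1/2+ν}]ₓ → −2^{1+ν} s^{−ν}/Γ(−ν)`;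
(c) `[f_ν, x^{1/2−ν}]ₓ → −s^ν/(2^{ν−1} Γ(ν))`; (d) `[f_{−ν}, x^{1/2−ν}]ₓ → 0`. -/
theorem stmt11 (ν s : ℝ) (hν : ν ∈ Ioo (0:ℝ) 1) (hs : 0 < s) :
    Tendsto (fun x => wBracketR (fun y => y ^ ((1:ℝ)/2) * besselJ ν (y * s))
        (fun y => y ^ ((1:ℝ)/2 + ν)) x) (nhdsWithin 0 (Ioi 0)) (nhds 0) ∧
    Tendsto (fun x => wBracketR (fun y => y ^ ((1:ℝ)/2) * besselJ (-ν) (y * s))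
        (fun y => y ^ ((1:ℝ)/2 + ν)) x) (nhdsWithin 0 (Ioi 0))
      (nhds (-(2 ^ (1 + ν) * s ^ (-ν)) / Real.Gamma (-ν))) ∧
    Tendsto (fun x => wBracketR (fun y => y ^ ((1:ℝ)/2) * besselJ ν (y * s))
        (fun y => y ^ ((1:ℝ)/2 - ν)) x) (nhdsWithin 0 (Ioi 0))
      (nhds (-(s ^ ν) / (2 ^ (ν - 1) * Real.Gamma ν))) ∧
    Tendsto (fun x => wBracketR (fun y => y ^ ((1:ℝ)/2) * besselJ (-ν) (y * s))
        (fun y => y ^ ((1:ℝ)/2 - ν)) x) (nhdsWithin 0 (Ioi 0)) (nhds 0) := by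
  obtain ⟨hν0, hν1⟩ := hν
  have hΓ : Real.Gamma (-ν) ≠ 0 := Real.Gamma_ne_zero fun m hm => by
    rcases m with _ | m
    · simp only [CharP.cast_eq_zero, neg_zero, neg_eq_zero] at hm
      exact hν0.ne' hm
    · push_cast at hm
      linarith [m.cast_nonneg (α := ℝ)]
  refine ⟨tendsto_wBracketR_besselJ_self hs.le (by linarith) rfl, ?_, ?_,
    tendsto_wBracketR_besselJ_self hs.le (by linarith) (by ring)⟩
  · convert tendsto_wBracketR_besselJ_of_add_eq_one (μ := -ν) (b := 1 / 2 + ν) hs.le (by ring)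
      using 2
    rw [Real.Gamma_add_one (neg_ne_zero.mpr hν0.ne'), Real.div_rpow hs.le zero_le_two,
      Real.rpow_neg zero_le_two, Real.rpow_add two_pos, Real.rpow_one]
    field_simp
    ring
  · convert tendsto_wBracketR_besselJ_of_add_eq_one (μ := ν) (b := 1 / 2 - ν) hs.le (by ring)
      using 2
    rw [Real.Gamma_add_one hν0.ne', Real.div_rpow hs.le zero_le_two, Real.rpow_sub two_pos,
      Real.rpow_one]
    field_simp
    ring
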